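/- arXiv:1208.5612 — 2 statements merged into one kernel-verified Lean document; each statement's English description precedes it below -/
import Mathlib

section
/- Fix positive integers r, t, ℓ, and a positive integer c. Let m be a positive integer with ℓ ∣ m and c ∣ m/ℓ, and let f_1, …, f_r be positive integers with Σ_i f_i = m. Then the following are equivalent: (a) there exists a family of non-negative integers (f_{w,(i,j)}) indexed by 1 ≤ w ≤ ℓ, 1 ≤ i ≤ r, 1 ≤ j ≤ t such that, setting f_{w,i} := c · Σ_{j=1}^{t} f_{w,(i,j)}, one has Σ_{i=1}^{r} f_{w,i} = m/ℓ for every w and Σ_{w=1}^{ℓ} f_{w,i} = f_i for every i; (b) c ∣ f_i for every 1 ≤ i ≤ r. -/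
theorem stmt_3 (r t ℓ c : ℕ) (hr : 0 < r) (ht : 0 < t) (hℓ : 0 < ℓ) (hc : 0 < c)
    (m : ℕ) (hm : 0 < m) (hℓm : ℓ ∣ m) (hcm : c ∣ m / ℓ)
    (f : Fin r → ℕ) (hf : ∀ i, 0 < f i) (hsum : ∑ i, f i = m) :
    (∃ F : Fin ℓ → Fin r → Fin t → ℕ,
        (∀ w, ∑ i, c * ∑ j, F w i j = m / ℓ) ∧
        (∀ i, ∑ w, c * ∑ j, F w i j = f i)) ↔
      (∀ i, c ∣ f i) := by
  constructor
  · rintro ⟨F, -, h2⟩ i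
    rw [← h2 i]
    exact Finset.dvd_sum fun w _ => dvd_mul_right c _
  · intro hdvd
    -- N is the number of units per row; each f i consists of f i / c units
    set N : ℕ := m / ℓ / c with hNdef
    have hmℓ : 0 < m / ℓ := Nat.div_pos (Nat.le_of_dvd hm hℓm) hℓ
    have hmℓN : m / ℓ = c * N := (Nat.mul_div_cancel' hcm).symm
    have hN : 0 < N := by
      rcases Nat.eq_zero_or_pos N with h | h
      · rw [h, Nat.mul_zero] at hmℓN; omega
      · exact h
    -- blocks: a' i = f i / c (extended by 0), S = partial sums
    set a' : ℕ → ℕ := fun i => if h : i < r then f ⟨i, h⟩ / c else 0 with ha'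
    set S : ℕ → ℕ := fun k => ∑ i ∈ Finset.range k, a' i with hS
    have hSmono : Monotone S := by
      apply monotone_nat_of_le_succ
      intro k
      simp only [hS, Finset.sum_range_succ]
      exact Nat.le_add_right _ _
    have hS0 : S 0 = 0 := by simp [hS]
    have hSr : S r = ℓ * N := by
      have h1 : S r = ∑ i : Fin r, (f i / c) := by
        show ∑ i ∈ Finset.range r, a' i = _
        rw [Finset.sum_range]
        refine Finset.sum_congr rfl fun i _ => ?_
        simp [ha', i.isLt]
      rw [h1]
      have hmc : (∑ i : Fin r, f i / c) * c = m := by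
        rw [Finset.sum_mul, ← hsum]
        exact Finset.sum_congr rfl fun i _ => Nat.div_mul_cancel (hdvd i)
      have hm2 : m = ℓ * (c * N) := by rw [← hmℓN, Nat.mul_div_cancel' hℓm]
      rw [hm2] at hmc
      have : (∑ i : Fin r, f i / c) * c = (ℓ * N) * c := by rw [hmc]; ring
      exact Nat.eq_of_mul_eq_mul_right hc this
    -- the matrix entry
    set A : Fin ℓ → Fin r → ℕ := fun w i =>
      ((Finset.Ico (S i) (S (i + 1))).filter (fun n => n / N = (w : ℕ))).card with hA
    -- column sums
    have hcol : ∀ i : Fin r, ∑ w, A w i = f i / c := by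
      intro i
      have hsub : ∀ n ∈ Finset.Ico (S (i : ℕ)) (S ((i : ℕ) + 1)), n / N < ℓ := by
        intro n hn
        rw [Finset.mem_Ico] at hn
        have : n < S r := lt_of_lt_of_le hn.2 (hSmono i.isLt)
        rw [hSr] at this
        exact (Nat.div_lt_iff_lt_mul hN).2 (by omega)
      have hcard := Finset.card_eq_sum_card_fiberwise
        (f := fun n => (⟨n / N % ℓ, Nat.mod_lt _ hℓ⟩ : Fin ℓ))
        (s := Finset.Ico (S (i : ℕ)) (S ((i : ℕ) + 1))) (t := Finset.univ)
        (fun n _ => Finset.mem_univ _)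
      rw [Nat.card_Ico] at hcard
      have hSi : S ((i : ℕ) + 1) - S (i : ℕ) = f i / c := by
        simp only [hS, Finset.sum_range_succ]
        simp [ha', i.isLt]
      rw [hSi] at hcard
      rw [hcard]
      refine Finset.sum_congr rfl fun w _ => ?_
      simp only [hA]
      congr 1
      apply Finset.filter_congr
      intro n hn
      have hlt := hsub n hn
      simp [Fin.ext_iff, Nat.mod_eq_of_lt hlt]
    -- row sums
    have hrow : ∀ w : Fin ℓ, ∑ i, A w i = N := by
      intro w
      have haux : ∀ k, ∑ i ∈ Finset.range k,
          ((Finset.Ico (S i) (S (i + 1))).filter (fun n => n / N = (w : ℕ))).card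
          = ((Finset.Ico (S 0) (S k)).filter (fun n => n / N = (w : ℕ))).card := by
        intro k
        induction k with
        | zero => simp
        | succ k ih =>
          rw [Finset.sum_range_succ, ih,
            ← Finset.card_union_of_disjoint
              (Finset.disjoint_filter_filter (Finset.Ico_disjoint_Ico_consecutive _ _ _)),
            ← Finset.filter_union,
            Finset.Ico_union_Ico_eq_Ico (hSmono (Nat.zero_le k)) (hSmono (Nat.le_succ k))]
      have h1 : ∑ i : Fin r, A w i
          = ((Finset.Ico (S 0) (S r)).filter (fun n => n / N = (w : ℕ))).card := by
        rw [← haux r, Finset.sum_range]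
      rw [h1, hS0, hSr]
      have h2 : (Finset.Ico 0 (ℓ * N)).filter (fun n => n / N = (w : ℕ))
          = Finset.Ico ((w : ℕ) * N) ((w : ℕ) * N + N) := by
        ext n
        simp only [Finset.mem_filter, Finset.mem_Ico, Nat.zero_le, true_and]
        constructor
        · rintro ⟨hn, hq⟩
          have hdm := Nat.div_add_mod n N
          have hmod : n % N < N := Nat.mod_lt _ hN
          rw [hq, Nat.mul_comm] at hdm
          omega
        · rintro ⟨h1, h2⟩
          have hwℓ : (w : ℕ) < ℓ := w.isLt
          have hq : n / N = (w : ℕ) := by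
            apply Nat.div_eq_of_lt_le
            · omega
            · rw [Nat.succ_mul]; omega
          refine ⟨?_, hq⟩
          have : ((w : ℕ) + 1) * N ≤ ℓ * N := Nat.mul_le_mul_right N hwℓ
          rw [Nat.add_mul, Nat.one_mul] at this
          omega
      rw [h2, Nat.card_Ico]
      omega
    -- assemble F
    refine ⟨fun w i j => if (j : ℕ) = 0 then A w i else 0, ?_, ?_⟩ <;>
      [intro w; intro i] <;>
      · have hj : ∀ w' i', ∑ j : Fin t, (if (j : ℕ) = 0 then A w' i' else 0) = A w' i' := by
          intro w' i'
          rw [Finset.sum_eq_single (⟨0, ht⟩ : Fin t)]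
          · simp
          · intro b _ hb
            simp only [ite_eq_right_iff]
            intro h0
            exact absurd (Fin.ext h0) hb
          · simp
        simp only [hj]
        first
        | · rw [← Finset.mul_sum, hrow w, hmℓN]
        | · rw [hmℓN] at *
            calc ∑ w, c * A w i = c * ∑ w, A w i := by rw [Finset.mul_sum]
              _ = c * (f i / c) := by rw [hcol i]
              _ = f i := Nat.mul_div_cancel' (hdvd i)
end

section
/- Let s, m, d, e be positive integers with s ∣ m·d, and set ℓ := gcd(s, e). Then s ∣ m · gcd(d, s/ℓ) if and only if ℓ ∣ m. -/
theorem stmt_5 (s m d e : ℕ) (hs : 0 < s) (hm : 0 < m) (hd : 0 < d) (he : 0 < e)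
    (hdiv : s ∣ m * d) :
    s ∣ m * Nat.gcd d (s / Nat.gcd s e) ↔ Nat.gcd s e ∣ m := by
  set ℓ := Nat.gcd s e with hℓ
  have hℓpos : 0 < ℓ := Nat.gcd_pos_of_pos_left e hs
  have hℓs : ℓ ∣ s := Nat.gcd_dvd_left s e
  set t := s / ℓ with ht
  have hst : s = ℓ * t := (Nat.mul_div_cancel' hℓs).symm
  have htpos : 0 < t := Nat.div_pos (Nat.le_of_dvd hs hℓs) hℓpos
  set g := Nat.gcd d t with hg
  have hgpos : 0 < g := Nat.gcd_pos_of_pos_left t hd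
  have hgd : g ∣ d := Nat.gcd_dvd_left d t
  have hgt : g ∣ t := Nat.gcd_dvd_right d t
  constructor
  · intro h
    have h2 : ℓ * t ∣ m * t := by
      rw [← hst]
      exact h.trans (Nat.mul_dvd_mul_left m hgt)
    exact (Nat.mul_dvd_mul_iff_right htpos).mp h2
  · rintro ⟨m', rfl⟩
    -- s ∣ m d gives t ∣ m' d
    have h1 : t ∣ m' * d := by
      have : ℓ * t ∣ ℓ * (m' * d) := by
        rw [← hst, ← mul_assoc]; exact hdiv
      exact (Nat.mul_dvd_mul_iff_left hℓpos).mp this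
    have h2 : t / g ∣ m' * (d / g) := by
      have : g * (t / g) ∣ g * (m' * (d / g)) := by
        rw [Nat.mul_div_cancel' hgt, mul_left_comm, Nat.mul_div_cancel' hgd]
        exact h1
      exact (Nat.mul_dvd_mul_iff_left hgpos).mp this
    have hcop : Nat.Coprime (t / g) (d / g) :=
      (Nat.coprime_div_gcd_div_gcd hgpos).symm
    have h3 : t / g ∣ m' := hcop.dvd_of_dvd_mul_right h2
    have h4 : t ∣ m' * g := by
      calc t = g * (t / g) := (Nat.mul_div_cancel' hgt).symm
        _ ∣ g * m' := Nat.mul_dvd_mul_left g h3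
        _ = m' * g := mul_comm g m'
    calc s = ℓ * t := hst
      _ ∣ ℓ * (m' * g) := Nat.mul_dvd_mul_left ℓ h4
      _ = ℓ * m' * g := (mul_assoc ℓ m' g).symm
end
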